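/- Let E be a strongly connected finite directed graph with no sources, and let w be a vertex. For every n ≥ 1 there is a cycle β at w with |β| ≡ gcd(P_E, n) (mod n). -/

import Mathlib

/-- A directed graph: vertices, edges, range and source maps. -/
structure DGraph where
  V : Type
  E : Type
  r : E → V
  s : E → V

namespace DGraph

variable {G : DGraph}

/-- A path in a directed graph: a word of composable edges together with a source vertex
(so that length-zero paths are vertices). -/
structure Path (G : DGraph) where
  src : G.V
  edges : List G.E
  chain : List.Chain' (fun a b => G.s a = G.r b) edges
  srcEq : ∀ a ∈ edges.getLast?, G.s a = src

/-- The range of a path. -/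
def Path.rng (p : G.Path) : G.V := p.edges.head?.elim p.src G.r

/-- The length of a path. -/
def Path.length (p : G.Path) : ℕ := p.edges.length

/-- The length-zero path at a vertex. -/
def Path.nil (G : DGraph) (v : G.V) : G.Path :=
  ⟨v, [], List.isChain_nil, by simp⟩

@[simp] theorem Path.length_nil (v : G.V) : (Path.nil G v).length = 0 := rfl

/-- Prepend an edge to a path. -/
def Path.cons (e : G.E) (p : G.Path) (h : p.rng = G.s e) : G.Path where
  src := p.src
  edges := e :: p.edges
  chain := by
    refine List.isChain_cons.mpr ?_
    refine ⟨fun b hb => ?_, p.chain⟩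
    rw [← h]
    simp [Path.rng, Option.mem_def.mp hb]
  srcEq := by
    intro a ha
    cases hp : p.edges with
    | nil =>
      rw [hp] at ha
      simp only [List.getLast?_singleton, Option.mem_def, Option.some.injEq] at ha
      subst ha
      have h0 : p.rng = p.src := by simp [Path.rng, hp]
      rw [← h, h0]
    | cons f t =>
      apply p.srcEq
      rw [hp]
      rw [hp, List.getLast?_cons_cons] at ha
      exact ha

@[simp] theorem Path.length_cons (e : G.E) (p : G.Path) (h : p.rng = G.s e) :
    (Path.cons e p h).length = p.length + 1 := rfl

/-- Remove the first edge of a path. -/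
def Path.tail (p : G.Path) : G.Path where
  src := p.src
  edges := p.edges.tail
  chain := p.chain.tail
  srcEq := by
    intro a ha
    apply p.srcEq
    cases hp : p.edges with
    | nil => rw [hp] at ha; simp at ha
    | cons f t =>
      rw [hp] at ha
      simp only [List.tail_cons] at ha
      cases t with
      | nil => simp at ha
      | cons g u => rw [List.getLast?_cons_cons]; exact ha

@[simp] theorem Path.length_tail (p : G.Path) : p.tail.length = p.length - 1 := by
  simp [Path.tail, Path.length]

/-- The initial segment of a path consisting of its first `k` edges. -/
def Path.take (p : G.Path) (k : ℕ) : G.Path where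
  src := (p.edges.drop k).head?.elim p.src G.r
  edges := p.edges.take k
  chain := p.chain.take k
  srcEq := by
    intro a ha
    have hc : List.Chain' (fun a b => G.s a = G.r b) (p.edges.take k ++ p.edges.drop k) := by
      rw [List.take_append_drop]; exact p.chain
    replace hc := List.isChain_append.mp hc
    obtain ⟨-, -, hadj⟩ := hc
    cases hd : p.edges.drop k with
    | nil =>
      have htake : p.edges.take k = p.edges := by
        have h1 := List.take_append_drop k p.edges
        rw [hd, List.append_nil] at h1
        exact h1
      simp only [List.head?_nil, Option.elim]
      exact p.srcEq a (htake ▸ ha)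
    | cons f t =>
      simp only [List.head?_cons, Option.elim]
      exact hadj a ha f (by rw [hd]; simp)

/-- `[μ]_n` : the initial segment of `μ` of length `|μ| mod n`. -/
def Path.trunc (m : ℕ) (p : G.Path) : G.Path := p.take (p.length % m)

/-- Concatenation of paths, `p` followed after `q` (so `p.append q` has range the range of `p`
and source the source of `q`). -/
def Path.append (p q : G.Path) (h : p.src = q.rng) : G.Path where
  src := q.src
  edges := p.edges ++ q.edges
  chain := by
    refine List.isChain_append.mpr ?_
    refine ⟨p.chain, q.chain, fun a ha b hb => ?_⟩
    rw [p.srcEq a ha, h]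
    simp [Path.rng, Option.mem_def.mp hb]
  srcEq := by
    intro a ha
    cases hq : q.edges with
    | nil =>
      rw [hq, List.append_nil] at ha
      have h0 : q.rng = q.src := by simp [Path.rng, hq]
      rw [p.srcEq a ha, h, h0]
    | cons f t =>
      apply q.srcEq
      rw [hq]
      rw [hq, List.getLast?_append_cons] at ha
      exact ha

/-- A graph is row-finite if every vertex receives finitely many edges. -/
def RowFinite (G : DGraph) : Prop := ∀ v : G.V, {e : G.E | G.r e = v}.Finite

/-- A graph has no sources if every vertex receives an edge. -/
def NoSources (G : DGraph) : Prop := ∀ v : G.V, ∃ e : G.E, G.r e = v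

/-- A graph is strongly connected if for all vertices `v, w` there is a path from `w` to `v`. -/
def StronglyConnected (G : DGraph) : Prop :=
  ∀ v w : G.V, ∃ p : G.Path, p.src = w ∧ p.rng = v

/-- The set of paths of length less than `n`. -/
abbrev PathLt (G : DGraph) (n : ℕ) := {p : G.Path // p.length < n}

/-- The graph `E(n)` of Kribs and Solel: vertices are paths of length `< n`, and edges
are pairs `(e, μ)` with `r(μ) = s(e)` and `|μ| < n`, with source `μ` and range `[eμ]_n`. -/
def Eln (G : DGraph) (n : ℕ) : DGraph where
  V := PathLt G n
  E := {q : G.E × G.Path // q.2.length + 1 ≤ n ∧ q.2.rng = G.s q.1}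
  s := fun q => ⟨q.1.2, Nat.lt_of_succ_le q.2.1⟩
  r := fun q =>
    if h : q.1.2.length + 1 < n then
      ⟨Path.cons q.1.1 q.1.2 q.2.2, by simpa using h⟩
    else
      ⟨Path.nil G (G.r q.1.1), Nat.lt_of_lt_of_le (Nat.succ_pos _) q.2.1⟩

/-- A vertex of `E`, regarded as a length-zero vertex of `E(n)`. -/
def vtx (G : DGraph) (n : ℕ) (hn : 0 < n) (v : G.V) : PathLt G n :=
  ⟨Path.nil G v, by simpa using hn⟩

/-- `d` is the greatest common divisor of the set `S` of natural numbers. -/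
def IsGCDOf (d : ℕ) (S : Set ℕ) : Prop :=
  (∀ k ∈ S, d ∣ k) ∧ ∀ c : ℕ, (∀ k ∈ S, c ∣ k) → c ∣ d

/-- The set of lengths of (nonempty) cycles of `G`. -/
def CycleLengths (G : DGraph) : Set ℕ :=
  {k | ∃ p : G.Path, p.rng = p.src ∧ p.edges ≠ [] ∧ p.length = k}

/-- The set of lengths of (nonempty) cycles of `G` based at `v`. -/
def CycleLengthsAt (G : DGraph) (v : G.V) : Set ℕ :=
  {k | ∃ p : G.Path, p.src = v ∧ p.rng = v ∧ p.edges ≠ [] ∧ p.length = k}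

/-- The relation `v ∼ w` iff there is a path from `w` to `v` whose length is divisible by `d`. -/
def SimRel (G : DGraph) (d : ℕ) (v w : G.V) : Prop :=
  ∃ p : G.Path, p.src = w ∧ p.rng = v ∧ d ∣ p.length

/-- The connected-component relation of a graph: the smallest equivalence relation
identifying the range and the source of each edge. -/
def Comp (G : DGraph) : G.V → G.V → Prop :=
  Relation.EqvGen (fun a b => ∃ f : G.E, G.r f = a ∧ G.s f = b)

/-- The adjacency matrix of `E(n)` acting on vectors indexed by `E^{<n}`. -/
noncomputable def Aact (G : DGraph) (n : ℕ) (g : PathLt G n → ℝ) (v : PathLt G n) : ℝ :=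
  ∑ᶠ (f : (Eln G n).E) (_ : (Eln G n).r f = v), g ((Eln G n).s f)

/-- The pushforward of a vector on `E^{<n}` along `ν ↦ [ν]_m`. -/
noncomputable def pushf (G : DGraph) (n m : ℕ) (g : PathLt G n → ℝ) (μ : PathLt G m) : ℝ :=
  ∑ᶠ (ν : PathLt G n) (_ : Path.trunc m ν.1 = μ.1), g ν

instance : TopologicalSpace G.Path := ⊥

/-- The inverse limit `lim← E^{<n_k}` along the truncation maps. -/
def InvLim (G : DGraph) (n : ℕ → ℕ) : Type :=
  {f : (k : ℕ) → PathLt G (n k) // ∀ k, Path.trunc (n k) (f (k+1)).1 = (f k).1}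

instance (G : DGraph) (n : ℕ → ℕ) : TopologicalSpace (InvLim G n) :=
  inferInstanceAs (TopologicalSpace
    {f : (k : ℕ) → PathLt G (n k) // ∀ k, Path.trunc (n k) (f (k+1)).1 = (f k).1})

noncomputable instance (G : DGraph) (n : ℕ → ℕ) : MeasurableSpace (InvLim G n) := borel _

end DGraph

/- Modulo `n`, the lengths of cycles at `w` form a nonempty additively closed subset of the finite
group `ZMod n`, hence a subgroup `R`. Every cycle length of `E` is a difference of two cycle
lengths at `w`, so the preimage of `R` in `ℤ` contains all cycle lengths and `n`, hence their
gcd `gcd(P_E, n)`. -/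

namespace AddSubsemigroup

theorem mul_mem_of_pos {S : AddSubsemigroup ℕ} {s : ℕ} (hs : s ∈ S) {k : ℕ} (hk : 0 < k) :
    k * s ∈ S := by
  induction k with
  | zero => omega
  | succ k ih =>
    rcases Nat.eq_zero_or_pos k with rfl | hk
    · simpa using hs
    · simpa [Nat.succ_mul] using S.add_mem (ih hk) hs

def residues (S : AddSubsemigroup ℕ) (hS : (S : Set ℕ).Nonempty) (n : ℕ) [NeZero n] :
    AddSubgroup (ZMod n) where
  carrier := Nat.cast '' S
  add_mem' := by
    rintro _ _ ⟨a, ha, rfl⟩ ⟨b, hb, rfl⟩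
    exact ⟨a + b, S.add_mem ha hb, Nat.cast_add a b⟩
  zero_mem' := by
    obtain ⟨s, hs⟩ := hS
    exact ⟨n * s, mul_mem_of_pos hs (NeZero.pos n), by simp⟩
  neg_mem' := by
    rintro _ ⟨s, hs, rfl⟩
    have hn := NeZero.pos n
    -- `2n - 1 ≡ -1 (mod n)` and, unlike `n - 1`, is positive also for `n = 1`
    refine ⟨(2 * n - 1) * s, mul_mem_of_pos hs (by omega), ?_⟩
    rw [Nat.cast_mul, Nat.cast_sub (by omega), Nat.cast_mul, ZMod.natCast_self]
    simp

end AddSubsemigroup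

namespace DGraph

theorem IsGCDOf.natCast_gcd_mem {H : AddSubgroup ℤ} {P : ℕ} {S : Set ℕ} (hP : IsGCDOf P S)
    (hS : ∀ k ∈ S, (k : ℤ) ∈ H) {n : ℕ} (hn : (n : ℤ) ∈ H) : ((P.gcd n : ℕ) : ℤ) ∈ H := by
  obtain ⟨d, rfl⟩ := Int.subgroup_cyclic H
  simp only [← AddSubgroup.zmultiples_eq_closure, Int.mem_zmultiples_iff, Int.dvd_natCast]
    at hS hn ⊢
  exact Nat.dvd_gcd (hP.2 _ hS) hn

variable {G : DGraph}

namespace Path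

@[simp] theorem rng_append (p q : G.Path) (h : p.src = q.rng) : (p.append q h).rng = p.rng := by
  rcases hp : p.edges with _ | ⟨a, t⟩
  · have hnil : p.rng = p.src := by simp [Path.rng, hp]
    rw [hnil, h]
    simp [Path.rng, Path.append, hp]
  · simp [Path.rng, Path.append, hp]

@[simp] theorem length_append (p q : G.Path) (h : p.src = q.rng) :
    (p.append q h).length = p.length + q.length :=
  List.length_append

end Path

theorem add_mem_cycleLengthsAt_of_closed {w : G.V} (p : G.Path) (hs : p.src = w)
    (hr : p.rng = w) {b : ℕ} (hb : b ∈ CycleLengthsAt G w) :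
    p.length + b ∈ CycleLengthsAt G w := by
  obtain ⟨q, hqs, hqr, hqe, rfl⟩ := hb
  refine ⟨p.append q (hs.trans hqr.symm), hqs, by simpa using hr, ?_, by simp⟩
  simp [Path.append, hqe]

def cycleLengthsAtSubsemigroup (G : DGraph) (w : G.V) : AddSubsemigroup ℕ where
  carrier := CycleLengthsAt G w
  add_mem' := by
    rintro _ b ⟨p, hps, hpr, -, rfl⟩ hb
    exact add_mem_cycleLengthsAt_of_closed p hps hpr hb

theorem cycleLengthsAt_nonempty (hsc : StronglyConnected G) (hns : NoSources G) (w : G.V) :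
    (CycleLengthsAt G w).Nonempty := by
  obtain ⟨e, he⟩ := hns w
  obtain ⟨p, hps, hpr⟩ := hsc (G.s e) w
  exact ⟨_, Path.cons e p hpr, hps, he, List.cons_ne_nil _ _, rfl⟩

/-- A cycle at `u` conjugated by paths `w → u → w` is a cycle at `w`, longer by the cycle's
length than the closed path `w → u → w`; that closed path may be empty, so both are padded by
the conjugated cycle. -/
theorem exists_add_mem_cycleLengthsAt (hsc : StronglyConnected G) (w : G.V) {m : ℕ}
    (hm : m ∈ CycleLengths G) : ∃ a ∈ CycleLengthsAt G w, a + m ∈ CycleLengthsAt G w := by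
  obtain ⟨γ, hγ, hγe, rfl⟩ := hm
  obtain ⟨q, hqs, hqr⟩ := hsc γ.src w
  obtain ⟨p, hps, hpr⟩ := hsc w γ.src
  let loop := p.append q (hps.trans hqr.symm)
  let cyc := p.append (γ.append q hqr.symm) (by simpa using hps.trans hγ.symm)
  have hcyc : cyc.length ∈ CycleLengthsAt G w :=
    ⟨cyc, hqs, by simpa [cyc] using hpr, by simp [cyc, Path.append, hγe], rfl⟩
  refine ⟨loop.length + cyc.length,
    add_mem_cycleLengthsAt_of_closed loop hqs (by simpa [loop] using hpr) hcyc, ?_⟩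
  have hlen : loop.length + cyc.length + γ.length = cyc.length + cyc.length := by
    simp only [loop, cyc, Path.length_append]
    omega
  rw [hlen]
  exact (cycleLengthsAtSubsemigroup G w).add_mem hcyc hcyc

end DGraph

open DGraph in
theorem exists_cycle_length_cong_gcd_general (G : DGraph)
    (hsc : StronglyConnected G) (hns : NoSources G) (w : G.V)
    (P : ℕ) (hP : IsGCDOf P (CycleLengths G)) (n : ℕ) (hn : 0 < n) :
    ∃ β : G.Path, β.src = w ∧ β.rng = w ∧ β.edges ≠ [] ∧
      β.length % n = Nat.gcd P n % n := by
  have : NeZero n := ⟨hn.ne'⟩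
  let R := (cycleLengthsAtSubsemigroup G w).residues (cycleLengthsAt_nonempty hsc hns w) n
  let H := R.comap (Int.castAddHom (ZMod n))
  have hcycles : ∀ m ∈ CycleLengths G, (m : ℤ) ∈ H := by
    intro m hm
    obtain ⟨a, ha, ham⟩ := exists_add_mem_cycleLengthsAt hsc w hm
    have hsub := R.sub_mem ⟨_, ham, rfl⟩ ⟨_, ha, rfl⟩
    simpa [H] using hsub
  have hmod : (n : ℤ) ∈ H := by simp [H]
  obtain ⟨_, ⟨β, hβs, hβr, hβe, rfl⟩, hβ⟩ : ((P.gcd n : ℕ) : ZMod n) ∈ R := by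
    simpa [H] using hP.natCast_gcd_mem hcycles hmod
  refine ⟨β, hβs, hβr, hβe, (ZMod.natCast_eq_natCast_iff' _ _ _).mp ?_⟩
  simpa using hβ

open DGraph in
/-- Let `E` be a strongly connected finite directed graph with no sources
and `w` a vertex.  For every `n ≥ 1` there is a cycle `β` at `w` with
`|β| ≡ gcd(P_E, n) (mod n)`. -/
theorem exists_cycle_length_cong_gcd (G : DGraph) [Finite G.V] [Finite G.E]
    (hsc : StronglyConnected G) (hns : NoSources G) (w : G.V)
    (P : ℕ) (hP : IsGCDOf P (CycleLengths G)) (n : ℕ) (hn : 0 < n) :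
    ∃ β : G.Path, β.src = w ∧ β.rng = w ∧ β.edges ≠ [] ∧
      β.length % n = Nat.gcd P n % n :=
  exists_cycle_length_cong_gcd_general G hsc hns w P hP n hn
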